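/- Let k be an even positive integer and Δ ∈ (0, 1/k), and let ν = 2·(k/Δ²)^{1/3} (assumed a positive even integer). For each w ∈ {0,1}^{k/2}, define the block B_w = P′_{w,1} × ⋯ × P′_{w,ν} on [k]^ν by P′_{w,i}(j) = 1/k + (−1)^j · w_{⌈j/2⌉} · Δ·(i−1)/k for i ≤ ν/2 and P′_{w,i}(j) = P′_{w,ν−i+1}(j) for i > ν/2, and let ℬ = {B_w : w ∈ {0,1}^{k/2}}. Then there is an absolute constant c₀ > 0 such that for every m ≥ 1, every ℓ ∈ [m], every choice of blocks B_1,…,B_{ℓ−1} ∈ ℬ with S′ = B_1 × ⋯ × B_{ℓ−1}: the infimum over estimators θ̂_{ν(ℓ−1)+1},…,θ̂_{νℓ} of the maximum over B ∈ ℬ (with S = S′ × B) of E_{X∼S}[(1/ν)·∑_{i=ν(ℓ−1)+1}^{νℓ} TV(θ̂_i(X_1,…,X_i), P_i)] is at least c₀·(kΔ)^{1/3}, where P_i denotes the i-th component of S. -/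

import Mathlib

/-!
Only the last block matters, and the maximum over its index `w ∈ {0,1}^{k/2}` is at least the
average over all `w`. At time `i` of the block, the distributions for `w` and for `w` with bit `s`
flipped differ only on one pair of points, where they are `t_i/k` apart in total variation, with
`t_i = Δ·(distance of i to the ends of the block)`. Splitting TV over the pairs and applying Le
Cam's two-point bound to each bit (Assouad's lemma) bounds the averaged risk at time `i` below by
`t_i/72`, provided the Hellinger affinity of the two laws of the whole sample is at least `1/3`.
That affinity tensorizes; a coordinate of the last block costs at most `t_i²/k`, and
`∑ t_i² ≤ Δ²ν³/12 = 2k/3` by the choice of `ν`. Summing `t_i` over the block gives a risk of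
order `Δν`, which is `(kΔ)^{1/3}` up to a constant.
-/

open Finset

/-- `p` is a probability mass function on `Fin k` (representing `[k] = {1,…,k}`). -/
def IsPMF {k : ℕ} (p : Fin k → ℝ) : Prop :=
  (∀ j, 0 ≤ p j) ∧ ∑ j, p j = 1

/-- Total variation distance between two pmfs on `Fin k`. -/
noncomputable def TV {k : ℕ} (p q : Fin k → ℝ) : ℝ :=
  (1 / 2) * ∑ j, |p j - q j|

/-- Probability of the sample `x` under the product distribution whose `i`-th component
(1-based, `i = 1,…,n`) is `P i`. -/
noncomputable def prodProb {n k : ℕ} (P : ℕ → Fin k → ℝ) (x : Fin n → Fin k) : ℝ :=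
  ∏ i : Fin n, P (i.1 + 1) (x i)

/-- Expectation of `f` over the product distribution `P 1 × ⋯ × P n` on `[k]^n`. -/
noncomputable def Exp {n k : ℕ} (P : ℕ → Fin k → ℝ) (f : (Fin n → Fin k) → ℝ) : ℝ :=
  ∑ x : Fin n → Fin k, prodProb P x * f x

/-- A sequence of online estimators is adapted if the estimate at time `i` depends only on
the first `i` coordinates of the sample. -/
def Adapted (n k : ℕ) (θ : ℕ → (Fin n → Fin k) → Fin k → ℝ) : Prop :=
  ∀ (i : ℕ) (x y : Fin n → Fin k), (∀ j : Fin n, (j : ℕ) + 1 ≤ i → x j = y j) → θ i x = θ i y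

/-- The `i`-th distribution (1-based, `i ∈ [ν]`) of the block `B_w` on `[k]^ν` (`k = 2k'`):
`P′_{w,i}(j) = 1/k + (−1)^j·w_{⌈j/2⌉}·Δ(i−1)/k` for `i ≤ ν/2`, and
`P′_{w,i} = P′_{w,ν−i+1}` for `i > ν/2`. The element `j ∈ [k]` is `j.val + 1`. -/
noncomputable def blockP (k' ν : ℕ) (Δ : ℝ) (w : Fin k' → Bool) (i : ℕ)
    (j : Fin (2 * k')) : ℝ :=
  let i' : ℕ := if i ≤ ν / 2 then i else ν - i + 1
  1 / (2 * (k' : ℝ)) +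
    (if w ⟨j.1 / 2, by omega⟩ then
      (-1 : ℝ) ^ (j.1 + 1) * (Δ * ((i' : ℝ) - 1)) / (2 * (k' : ℝ))
    else 0)

/-- The product distribution obtained by concatenating blocks: block `b` (0-based) has
hypercube index `W b`, and the component at (1-based) time `i` is the
`(i − ⌊(i−1)/ν⌋·ν)`-th component of the block `⌊(i−1)/ν⌋`. -/
noncomputable def concatP (k' ν : ℕ) (Δ : ℝ) (W : ℕ → Fin k' → Bool) (i : ℕ) :
    Fin (2 * k') → ℝ :=
  blockP k' ν Δ (W ((i - 1) / ν)) (i - ((i - 1) / ν) * ν)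

theorem one_sub_sum_le_prod_one_sub {ι : Type*} (s : Finset ι) {a : ι → ℝ}
    (h0 : ∀ i ∈ s, 0 ≤ a i) (h1 : ∀ i ∈ s, a i ≤ 1) : 1 - ∑ i ∈ s, a i ≤ ∏ i ∈ s, (1 - a i) := by
  classical
  induction s using Finset.induction with
  | empty => simp
  | insert c s hc ih =>
    rw [prod_insert hc, sum_insert hc]
    have hrest := ih (fun i hi => h0 i (mem_insert_of_mem hi))
      fun i hi => h1 i (mem_insert_of_mem hi)
    have hc0 := h0 c (mem_insert_self c s)
    have hc1 := h1 c (mem_insert_self c s)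
    have hs : 0 ≤ ∑ i ∈ s, a i := sum_nonneg fun i hi => h0 i (mem_insert_of_mem hi)
    nlinarith

theorem three_mul_sum_range_sq_le (n : ℕ) : 3 * ∑ i ∈ range n, i ^ 2 ≤ n ^ 3 := by
  induction n with
  | zero => simp
  | succ n ih => rw [sum_range_succ]; ring_nf; ring_nf at ih; omega

section TwoPoint

variable {α : Type*} [Fintype α] {p q : α → ℝ}

theorem sq_sum_sqrt_mul_le_two_mul_sum_min (hp : ∀ x, 0 ≤ p x) (hq : ∀ x, 0 ≤ q x)
    (hp1 : ∑ x, p x = 1) (hq1 : ∑ x, q x = 1) :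
    (∑ x, √(p x * q x)) ^ 2 ≤ 2 * ∑ x, min (p x) (q x) := by
  have hmax : ∑ x, max (p x) (q x) ≤ 2 := by
    calc ∑ x, max (p x) (q x) ≤ ∑ x, (p x + q x) :=
          sum_le_sum fun x _ => max_le_add_of_nonneg (hp x) (hq x)
      _ = 2 := by rw [sum_add_distrib, hp1, hq1]; norm_num
  have hCS : (∑ x, √(p x * q x)) ^ 2 ≤ (∑ x, min (p x) (q x)) * ∑ x, max (p x) (q x) := by
    refine sum_sq_le_sum_mul_sum_of_sq_le_mul _ (fun x _ => le_min (hp x) (hq x))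
      (fun x _ => (hp x).trans (le_max_left _ _)) fun x _ => ?_
    rw [Real.sq_sqrt (mul_nonneg (hp x) (hq x)), min_mul_max]
  nlinarith [sum_nonneg fun x (_ : x ∈ univ) => le_min (hp x) (hq x)]

theorem le_cam_two_point {f g : α → ℝ} {δ : ℝ} (hp : ∀ x, 0 ≤ p x) (hq : ∀ x, 0 ≤ q x)
    (hp1 : ∑ x, p x = 1) (hq1 : ∑ x, q x = 1) (hf : ∀ x, 0 ≤ f x) (hg : ∀ x, 0 ≤ g x)
    (hδ : 0 ≤ δ) (hfg : ∀ x, δ ≤ f x + g x) :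
    δ * (∑ x, √(p x * q x)) ^ 2 / 2 ≤ ∑ x, p x * f x + ∑ x, q x * g x := by
  have hmin : δ * ∑ x, min (p x) (q x) ≤ ∑ x, p x * f x + ∑ x, q x * g x := by
    rw [mul_sum, ← sum_add_distrib]
    refine sum_le_sum fun x _ => ?_
    have hm := le_min (hp x) (hq x)
    nlinarith [mul_le_mul_of_nonneg_right (min_le_left (p x) (q x)) (hf x),
      mul_le_mul_of_nonneg_right (min_le_right (p x) (q x)) (hg x),
      mul_le_mul_of_nonneg_left (hfg x) hm]
  nlinarith [mul_le_mul_of_nonneg_left (sq_sum_sqrt_mul_le_two_mul_sum_min hp hq hp1 hq1) hδ]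

end TwoPoint

def flipAt {d : ℕ} (s : Fin d) (w : Fin d → Bool) : Fin d → Bool :=
  Function.update w s (!w s)

theorem flipAt_involutive {d : ℕ} (s : Fin d) : Function.Involutive (flipAt s) := by
  intro w
  ext y
  by_cases hy : y = s
  · subst hy; simp [flipAt]
  · simp [flipAt, Function.update_of_ne hy]

theorem assouad_lower_bound {α : Type*} [Fintype α] {d : ℕ} (p : (Fin d → Bool) → α → ℝ)
    (L : Fin d → (Fin d → Bool) → α → ℝ) {δ a : ℝ} (hp : ∀ w x, 0 ≤ p w x)
    (hp1 : ∀ w, ∑ x, p w x = 1) (hL : ∀ s w x, 0 ≤ L s w x) (hδ : 0 ≤ δ) (ha : 0 ≤ a)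
    (hsep : ∀ s w x, δ ≤ L s w x + L s (flipAt s w) x)
    (haff : ∀ s w, a ≤ ∑ x, √(p w x * p (flipAt s w) x)) :
    2 ^ d * d * (δ * a ^ 2 / 4) ≤ ∑ w, ∑ s, ∑ x, p w x * L s w x := by
  rw [sum_comm]
  have hcoord : ∀ s, 2 ^ d * (δ * a ^ 2 / 4) ≤ ∑ w, ∑ x, p w x * L s w x := by
    intro s
    set R : (Fin d → Bool) → ℝ := fun w => ∑ x, p w x * L s w x
    have hpair : ∀ w, δ * a ^ 2 / 2 ≤ R w + R (flipAt s w) := fun w =>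
      calc δ * a ^ 2 / 2 ≤ δ * (∑ x, √(p w x * p (flipAt s w) x)) ^ 2 / 2 := by
            gcongr; exact haff s w
        _ ≤ R w + R (flipAt s w) :=
            le_cam_two_point (hp w) (hp _) (hp1 w) (hp1 _) (hL s w) (hL s _) hδ (hsep s w)
    have hflip : ∑ w, R (flipAt s w) = ∑ w, R w :=
      Equiv.sum_comp (flipAt_involutive s).toPerm R
    have := sum_le_sum fun w (_ : w ∈ univ) => hpair w
    simp only [sum_const, card_univ, Fintype.card_fun, Fintype.card_bool, Fintype.card_fin,
      nsmul_eq_mul, sum_add_distrib, hflip] at this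
    push_cast at this
    linarith
  calc 2 ^ d * d * (δ * a ^ 2 / 4) = ∑ _s : Fin d, 2 ^ d * (δ * a ^ 2 / 4) := by
        rw [sum_const, card_univ, Fintype.card_fin, nsmul_eq_mul]; ring
    _ ≤ _ := sum_le_sum fun s _ => hcoord s

section ProductMeasure

variable {n k : ℕ} {P Q : ℕ → Fin k → ℝ}

theorem prodProb_nonneg (hP : ∀ i j, 0 ≤ P (i + 1) j) (x : Fin n → Fin k) : 0 ≤ prodProb P x :=
  prod_nonneg fun _ _ => hP _ _

theorem sum_prodProb (hP : ∀ i, ∑ j, P (i + 1) j = 1) : ∑ x : Fin n → Fin k, prodProb P x = 1 := by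
  simp only [prodProb, ← Fintype.prod_sum, hP, prod_const_one]

theorem sum_sqrt_prodProb_mul (hP : ∀ i j, 0 ≤ P (i + 1) j) (hQ : ∀ i j, 0 ≤ Q (i + 1) j) :
    ∑ x : Fin n → Fin k, √(prodProb P x * prodProb Q x) =
      ∏ i : Fin n, ∑ j, √(P (i + 1) j * Q (i + 1) j) := by
  rw [Fintype.prod_sum]
  refine sum_congr rfl fun x _ => ?_
  rw [prodProb, prodProb, ← prod_mul_distrib,
    Real.sqrt_prod _ fun i _ => mul_nonneg (hP _ _) (hQ _ _)]

end ProductMeasure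

theorem two_sub_sq_le_sqrt_one_sub_add_sqrt_one_add {t : ℝ} (ht0 : 0 ≤ t) (ht1 : t ≤ 1) :
    2 - t ^ 2 ≤ √(1 - t) + √(1 + t) := by
  have h1 := Real.sq_sqrt (by linarith : (0 : ℝ) ≤ 1 - t)
  have h2 := Real.sq_sqrt (by linarith : (0 : ℝ) ≤ 1 + t)
  have hprod : (√(1 - t) * √(1 + t)) ^ 2 = 1 - t ^ 2 := by rw [mul_pow, h1, h2]; ring
  have hpos := mul_nonneg (Real.sqrt_nonneg (1 - t)) (Real.sqrt_nonneg (1 + t))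
  have hge : 1 - t ^ 2 ≤ √(1 - t) * √(1 + t) := by nlinarith
  nlinarith [Real.sqrt_nonneg (1 - t), Real.sqrt_nonneg (1 + t)]

section PerturbedUniform

variable {k' : ℕ}

/-- `P′_{w,i}` of `blockP`, with the amplitude `Δ(i−1)` replaced by a free parameter `t`. -/
noncomputable def perturbedUniform (k' : ℕ) (t : ℝ) (w : Fin k' → Bool) (j : Fin (2 * k')) : ℝ :=
  1 / (2 * (k' : ℝ)) +
    (if w ⟨j.1 / 2, by omega⟩ then (-1 : ℝ) ^ (j.1 + 1) * t / (2 * (k' : ℝ)) else 0)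

def pairFst (s : Fin k') : Fin (2 * k') := ⟨2 * s, by omega⟩

def pairSnd (s : Fin k') : Fin (2 * k') := ⟨2 * s + 1, by omega⟩

theorem sum_fin_two_mul {M : Type*} [AddCommMonoid M] (f : Fin (2 * k') → M) :
    ∑ j, f j = ∑ s, (f (pairFst s) + f (pairSnd s)) := by
  rw [← (finProdFinEquiv.trans (finCongr (Nat.mul_comm k' 2))).sum_comp, Fintype.sum_prod_type]
  refine sum_congr rfl fun s _ => ?_
  rw [Fin.sum_univ_two]
  congr 2 <;> ext <;> simp [pairFst, pairSnd, add_comm]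

theorem perturbedUniform_pairFst (t : ℝ) (w : Fin k' → Bool) (s : Fin k') :
    perturbedUniform k' t w (pairFst s) = (1 - if w s then t else 0) / (2 * k') := by
  have hs : (⟨2 * s / 2, by omega⟩ : Fin k') = s := Fin.ext (by simp)
  simp only [perturbedUniform, pairFst, hs,
    (Odd.neg_one_pow ⟨(s : ℕ), rfl⟩ : (-1 : ℝ) ^ (2 * (s : ℕ) + 1) = -1)]
  split_ifs <;> ring

theorem perturbedUniform_pairSnd (t : ℝ) (w : Fin k' → Bool) (s : Fin k') :
    perturbedUniform k' t w (pairSnd s) = (1 + if w s then t else 0) / (2 * k') := by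
  have hs : (⟨(2 * s + 1) / 2, by omega⟩ : Fin k') = s := Fin.ext (by simp; omega)
  simp only [perturbedUniform, pairSnd, hs,
    (Even.neg_one_pow ⟨(s : ℕ) + 1, by ring⟩ : (-1 : ℝ) ^ (2 * (s : ℕ) + 1 + 1) = 1)]
  split_ifs <;> ring

theorem isPMF_perturbedUniform (hk' : 0 < k') {t : ℝ} (ht0 : 0 ≤ t) (ht1 : t ≤ 1)
    (w : Fin k' → Bool) : IsPMF (perturbedUniform k' t w) := by
  constructor
  · intro j
    have htK : t / (2 * k') ≤ 1 / (2 * k') := by gcongr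
    unfold perturbedUniform
    split_ifs
    · rcases neg_one_pow_eq_or ℝ (j.1 + 1) with h | h <;> rw [h, mul_div_assoc]
      · positivity
      · linarith
    · positivity
  · rw [sum_fin_two_mul]
    simp only [perturbedUniform_pairFst, perturbedUniform_pairSnd, ← add_div, sub_add_add_cancel,
      sum_const, card_univ, Fintype.card_fin, nsmul_eq_mul]
    field_simp
    ring

noncomputable def pairTV (p q : Fin (2 * k') → ℝ) (s : Fin k') : ℝ :=
  (1 / 2) * (|p (pairFst s) - q (pairFst s)| + |p (pairSnd s) - q (pairSnd s)|)

theorem TV_eq_sum_pairTV (p q : Fin (2 * k') → ℝ) : TV p q = ∑ s, pairTV p q s := by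
  rw [TV, sum_fin_two_mul, mul_sum]
  rfl

theorem pairTV_nonneg (p q : Fin (2 * k') → ℝ) (s : Fin k') : 0 ≤ pairTV p q s := by
  unfold pairTV; positivity

theorem pairTV_le_add (p q r : Fin (2 * k') → ℝ) (s : Fin k') :
    pairTV q r s ≤ pairTV p q s + pairTV p r s := by
  unfold pairTV
  have h1 := abs_sub_le (q (pairFst s)) (p (pairFst s)) (r (pairFst s))
  have h2 := abs_sub_le (q (pairSnd s)) (p (pairSnd s)) (r (pairSnd s))
  rw [abs_sub_comm (q (pairFst s)) (p (pairFst s))] at h1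
  rw [abs_sub_comm (q (pairSnd s)) (p (pairSnd s))] at h2
  linarith

theorem pairTV_perturbedUniform_flipAt {t : ℝ} (ht : 0 ≤ t) (w : Fin k' → Bool) (s : Fin k') :
    pairTV (perturbedUniform k' t w) (perturbedUniform k' t (flipAt s w)) s = t / (2 * k') := by
  have hK : (0 : ℝ) < 2 * k' := by have := s.pos; positivity
  have hflip : flipAt s w s = !w s := by simp [flipAt]
  have hgap : |(if w s then t else 0) - (if !w s then t else 0)| = t := by
    cases w s <;> simp [abs_of_nonneg ht]
  simp only [pairTV, perturbedUniform_pairFst, perturbedUniform_pairSnd, hflip, ← sub_div, abs_div,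
    abs_of_pos hK, sub_sub_sub_cancel_left, add_sub_add_left_eq_sub]
  rw [abs_sub_comm, hgap]
  ring

theorem one_sub_le_sum_sqrt_perturbedUniform_mul_flipAt {t : ℝ} (ht0 : 0 ≤ t)
    (ht1 : t ≤ 1) (w : Fin k' → Bool) (s : Fin k') :
    1 - t ^ 2 / (2 * k') ≤
      ∑ j, √(perturbedUniform k' t w j * perturbedUniform k' t (flipAt s w) j) := by
  have hK : (0 : ℝ) < 2 * k' := by have := s.pos; positivity
  have hsqrt : ∀ a b : ℝ, √(a / (2 * k') * (b / (2 * k'))) = √(a * b) / (2 * k') := fun a b => by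
    rw [div_mul_div_comm, Real.sqrt_div' _ (mul_self_nonneg _), Real.sqrt_mul_self hK.le]
  have hpair : ∀ s', (2 - if s' = s then t ^ 2 else 0) / (2 * k') ≤
      √(perturbedUniform k' t w (pairFst s') *
        perturbedUniform k' t (flipAt s w) (pairFst s')) +
      √(perturbedUniform k' t w (pairSnd s') *
        perturbedUniform k' t (flipAt s w) (pairSnd s')) := by
    intro s'
    simp only [perturbedUniform_pairFst, perturbedUniform_pairSnd, hsqrt, ← add_div]
    gcongr
    by_cases hs : s' = s
    · subst hs
      have := two_sub_sq_le_sqrt_one_sub_add_sqrt_one_add ht0 ht1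
      cases h : w s' <;> simp [flipAt, h] <;> linarith
    · have hw : flipAt s w s' = w s' := Function.update_of_ne hs _ _
      have hle : (if w s' = true then t else 0) ≤ 1 := by split_ifs <;> linarith
      rw [hw, if_neg hs, Real.sqrt_mul_self (by linarith), Real.sqrt_mul_self (by positivity)]
      linarith
  calc 1 - t ^ 2 / (2 * k') = ∑ s', (2 - if s' = s then t ^ 2 else 0) / (2 * k') := by
        simp only [← sum_div, sum_sub_distrib, sum_ite_eq', mem_univ, if_true, sum_const, card_univ,
          Fintype.card_fin, nsmul_eq_mul]
        rw [sub_div, mul_comm (k' : ℝ) 2, div_self hK.ne']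
    _ ≤ _ := (sum_le_sum fun s' _ => hpair s').trans_eq (sum_fin_two_mul
          fun j => √(perturbedUniform k' t w j * perturbedUniform k' t (flipAt s w) j)).symm

end PerturbedUniform

theorem sum_range_mul_succ_ite_div_eq {M : Type*} [AddCommMonoid M] {ν : ℕ} (hν : 0 < ν)
    (b : ℕ) (g : ℕ → M) :
    ∑ i ∈ range (ν * (b + 1)), (if i / ν = b then g (i % ν) else 0) = ∑ r ∈ range ν, g r := by
  rw [Nat.mul_succ, sum_range_add]
  have hlow : ∀ i ∈ range (ν * b), (if i / ν = b then g (i % ν) else 0) = 0 := fun i hi =>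
    if_neg (Nat.div_lt_of_lt_mul (by simpa [mul_comm] using hi)).ne
  have hlast : ∀ r ∈ range ν, (if (ν * b + r) / ν = b then g ((ν * b + r) % ν) else 0) = g r :=
    fun r hr => by
      have hr : r < ν := mem_range.mp hr
      rw [if_pos (by rw [Nat.mul_add_div hν, Nat.div_eq_of_lt hr, add_zero]),
        Nat.mul_add_mod, Nat.mod_eq_of_lt hr]
  rw [sum_eq_zero hlow, zero_add, sum_congr rfl hlast]

/-- The `(r+1)`-st distribution of a block has amplitude `Δ · tent ν r`: this is the paper's
`Δ(i−1)` after the reflection `i ↦ ν−i+1` of the second half of the block. -/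
def tent (ν r : ℕ) : ℕ := min r (ν - 1 - r)

theorem tent_lt {h r : ℕ} (hr : r < 2 * h) : tent (2 * h) r < h := by
  unfold tent; omega

theorem mul_tent_le_one {Δ : ℝ} {h r : ℕ} (hΔ : 0 ≤ Δ) (hΔh : Δ * h ≤ 1) (hr : r < 2 * h) :
    Δ * tent (2 * h) r ≤ 1 :=
  (mul_le_mul_of_nonneg_left (by exact_mod_cast (tent_lt hr).le) hΔ).trans hΔh

theorem sum_range_tent (f : ℕ → ℝ) (h : ℕ) :
    ∑ r ∈ range (2 * h), f (tent (2 * h) r) = 2 * ∑ r ∈ range h, f r := by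
  rw [show 2 * h = h + h by omega, sum_range_add, two_mul]
  congr 1
  · exact sum_congr rfl fun r hr => by
      rw [show tent (h + h) r = r by unfold tent; simp at hr; omega]
  · rw [← sum_range_reflect f h]
    exact sum_congr rfl fun m hm => by
      rw [show tent (h + h) (h + m) = h - 1 - m by unfold tent; simp at hm; omega]

theorem sum_range_tent_eq (h : ℕ) : ∑ r ∈ range (2 * h), (tent (2 * h) r : ℝ) = h * (h - 1) := by
  rw [sum_range_tent (fun r => (r : ℝ))]
  induction h with
  | zero => simp
  | succ h ih => rw [sum_range_succ, mul_add, ih]; push_cast; ring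

theorem sum_range_tent_sq_le (h : ℕ) :
    ∑ r ∈ range (2 * h), (tent (2 * h) r : ℝ) ^ 2 ≤ 2 * h ^ 3 / 3 := by
  rw [sum_range_tent (fun r => (r : ℝ) ^ 2)]
  have : 3 * ∑ r ∈ range h, (r : ℝ) ^ 2 ≤ h ^ 3 := by exact_mod_cast three_mul_sum_range_sq_le h
  linarith

section BlockShape

variable {k' ν : ℕ} {Δ : ℝ}

theorem blockP_succ (w : Fin k' → Bool) {r : ℕ} (hr : r < ν) :
    blockP k' ν Δ w (r + 1) = perturbedUniform k' (Δ * tent ν r) w := by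
  have hi : (if r + 1 ≤ ν / 2 then r + 1 else ν - (r + 1) + 1) = tent ν r + 1 := by
    unfold tent; split_ifs <;> omega
  change perturbedUniform k' (Δ * (((if r + 1 ≤ ν / 2 then r + 1 else ν - (r + 1) + 1 : ℕ) : ℝ)
    - 1)) w = _
  rw [hi]
  push_cast
  ring_nf

theorem concatP_succ (hν : 0 < ν) (V : ℕ → Fin k' → Bool) (i : ℕ) :
    concatP k' ν Δ V (i + 1) = perturbedUniform k' (Δ * tent ν (i % ν)) (V (i / ν)) := by
  have hmod : i + 1 - i / ν * ν = i % ν + 1 := by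
    have := Nat.div_add_mod i ν
    rw [mul_comm] at this
    omega
  rw [concatP, Nat.add_sub_cancel, hmod, blockP_succ _ (Nat.mod_lt i hν)]

end BlockShape

theorem Exp_const_mul_sum {n k : ℕ} (P : ℕ → Fin k → ℝ) (c : ℝ) (I : Finset ℕ)
    (f : ℕ → (Fin n → Fin k) → ℝ) :
    Exp P (fun x => c * ∑ i ∈ I, f i x) = c * ∑ i ∈ I, Exp P (f i) := by
  simp only [Exp, mul_sum]
  rw [sum_comm]
  exact sum_congr rfl fun i _ => sum_congr rfl fun x _ => by ring

section LastBlock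

variable {k' h : ℕ} {Δ : ℝ}

theorem isPMF_concatP (hk' : 0 < k') (hh : 0 < h) (hΔ : 0 ≤ Δ) (hΔh : Δ * h ≤ 1)
    (V : ℕ → Fin k' → Bool) (i : ℕ) : IsPMF (concatP k' (2 * h) Δ V (i + 1)) := by
  rw [concatP_succ (by omega)]
  exact isPMF_perturbedUniform hk' (by positivity)
    (mul_tent_le_one hΔ hΔh (Nat.mod_lt i (by omega))) _

/-- The squared amplitudes of a block sum to at most `2h³/3`, so the losses `t²/(2k')` of
affinity at the coordinates of the last block add up to at most `2/3`. -/
theorem one_third_le_sum_sqrt_prodProb_mul (hk' : 0 < k') (hh : 0 < h) (hΔ : 0 ≤ Δ)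
    (hΔh : Δ * h ≤ 1) (hΔh3 : Δ ^ 2 * h ^ 3 ≤ 2 * k') (W : ℕ → Fin k' → Bool) (b : ℕ)
    (w : Fin k' → Bool) (s : Fin k') :
    1 / 3 ≤ ∑ x : Fin (2 * h * (b + 1)) → Fin (2 * k'),
      √(prodProb (concatP k' (2 * h) Δ (Function.update W b w)) x *
        prodProb (concatP k' (2 * h) Δ (Function.update W b (flipAt s w))) x) := by
  have hK : (2 : ℝ) ≤ 2 * k' := by linarith [(Nat.one_le_cast (α := ℝ)).mpr hk']
  have hν : 0 < 2 * h := by omega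
  have hamp : ∀ i, 0 ≤ Δ * tent (2 * h) (i % (2 * h)) ∧ Δ * tent (2 * h) (i % (2 * h)) ≤ 1 :=
    fun i => ⟨by positivity, mul_tent_le_one hΔ hΔh (Nat.mod_lt i hν)⟩
  set a : ℕ → ℝ := fun i =>
    if i / (2 * h) = b then (Δ * tent (2 * h) (i % (2 * h))) ^ 2 / (2 * k') else 0 with ha
  have ha0 : ∀ i, 0 ≤ a i := fun i => by simp only [ha]; split_ifs <;> positivity
  have ha1 : ∀ i, a i ≤ 1 := fun i => by
    simp only [ha]
    split_ifs
    · rw [div_le_one (by linarith)]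
      nlinarith [hamp i]
    · norm_num
  have hcoord : ∀ i : ℕ, 1 - a i ≤ ∑ j, √(concatP k' (2 * h) Δ (Function.update W b w) (i + 1) j *
      concatP k' (2 * h) Δ (Function.update W b (flipAt s w)) (i + 1) j) := by
    intro i
    rw [concatP_succ hν, concatP_succ hν]
    by_cases hi : i / (2 * h) = b
    · simp only [ha, hi, if_true, Function.update_self]
      exact one_sub_le_sum_sqrt_perturbedUniform_mul_flipAt (hamp i).1 (hamp i).2 w s
    · have hP := isPMF_perturbedUniform hk' (hamp i).1 (hamp i).2 (W (i / (2 * h)))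
      simp only [ha, hi, if_false, sub_zero, Function.update_of_ne hi,
        Real.sqrt_mul_self (hP.1 _), hP.2, le_refl]
  have hsum : ∑ i ∈ range (2 * h * (b + 1)), a i ≤ 2 / 3 := by
    rw [ha, sum_range_mul_succ_ite_div_eq hν b fun r => (Δ * tent (2 * h) r) ^ 2 / (2 * k'),
      ← sum_div]
    simp_rw [mul_pow, ← mul_sum]
    rw [div_le_iff₀ (by linarith)]
    nlinarith [mul_le_mul_of_nonneg_left (sum_range_tent_sq_le h) (sq_nonneg Δ)]
  rw [sum_sqrt_prodProb_mul (fun i j => (isPMF_concatP hk' hh hΔ hΔh _ i).1 j)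
    (fun i j => (isPMF_concatP hk' hh hΔ hΔh _ i).1 j)]
  calc (1 : ℝ) / 3 ≤ 1 - ∑ i : Fin (2 * h * (b + 1)), a i := by
        rw [Fin.sum_univ_eq_sum_range a]; linarith
    _ ≤ ∏ i : Fin (2 * h * (b + 1)), (1 - a i) :=
        one_sub_sum_le_prod_one_sub _ (fun i _ => ha0 i) fun i _ => ha1 i
    _ ≤ _ := prod_le_prod (fun i _ => sub_nonneg.mpr (ha1 i)) fun i _ => hcoord i

theorem sum_Exp_TV_ge (hk' : 0 < k') (hh : 0 < h) (hΔ : 0 ≤ Δ) (hΔh : Δ * h ≤ 1)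
    (hΔh3 : Δ ^ 2 * h ^ 3 ≤ 2 * k') (W : ℕ → Fin k' → Bool) (b : ℕ)
    (θ : (Fin (2 * h * (b + 1)) → Fin (2 * k')) → Fin (2 * k') → ℝ) {r : ℕ} (hr : r < 2 * h) :
    2 ^ k' * (Δ * tent (2 * h) r / 72) ≤
      ∑ w, Exp (concatP k' (2 * h) Δ (Function.update W b w))
        (fun x => TV (θ x) (concatP k' (2 * h) Δ (Function.update W b w) (2 * h * b + r + 1))) := by
  set t := Δ * tent (2 * h) r
  have ht : 0 ≤ t ∧ t ≤ 1 := ⟨by positivity, mul_tent_le_one hΔ hΔh hr⟩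
  have hlast : ∀ w, concatP k' (2 * h) Δ (Function.update W b w) (2 * h * b + r + 1) =
      perturbedUniform k' t w := fun w => by
    rw [concatP_succ (by omega), Nat.mul_add_div (by omega), Nat.div_eq_of_lt hr, add_zero,
      Nat.mul_add_mod, Nat.mod_eq_of_lt hr, Function.update_self]
  have hP := fun w i => isPMF_concatP hk' hh hΔ hΔh (Function.update W b w) i
  have key := assouad_lower_bound (fun w => prodProb (concatP k' (2 * h) Δ (Function.update W b w)))
    (fun s w x => pairTV (θ x) (perturbedUniform k' t w) s) (δ := t / (2 * k')) (a := 1 / 3)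
    (fun w => prodProb_nonneg fun i j => (hP w i).1 j) (fun w => sum_prodProb fun i => (hP w i).2)
    (fun _ _ _ => pairTV_nonneg _ _ _) (by positivity) (by norm_num)
    (fun s w x => (pairTV_perturbedUniform_flipAt ht.1 w s).symm.trans_le (pairTV_le_add _ _ _ s))
    (fun s w => one_third_le_sum_sqrt_prodProb_mul hk' hh hΔ hΔh hΔh3 W b w s)
  calc 2 ^ k' * (t / 72) = 2 ^ k' * k' * (t / (2 * k') * (1 / 3) ^ 2 / 4) := by
        field_simp
        ring
    _ ≤ _ := key
    _ = _ := sum_congr rfl fun w _ => by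
        simp only [Exp, hlast, TV_eq_sum_pairTV, mul_sum]
        exact sum_comm

theorem sum_blockRisk_ge (hk' : 0 < k') (hh : 0 < h) (hΔ : 0 ≤ Δ) (hΔh : Δ * h ≤ 1)
    (hΔh3 : Δ ^ 2 * h ^ 3 ≤ 2 * k') (W : ℕ → Fin k' → Bool) (b : ℕ)
    (θ : ℕ → (Fin (2 * h * (b + 1)) → Fin (2 * k')) → Fin (2 * k') → ℝ) :
    2 ^ k' * (Δ * (h - 1) / 144) ≤
      ∑ w, Exp (concatP k' (2 * h) Δ (Function.update W b w))
        (fun x => 1 / ((2 * h : ℕ) : ℝ) * ∑ i ∈ Icc (2 * h * b + 1) (2 * h * (b + 1)),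
          TV (θ i x) (concatP k' (2 * h) Δ (Function.update W b w) i)) := by
  have hIcc : ∀ g : ℕ → ℝ, ∑ i ∈ Icc (2 * h * b + 1) (2 * h * (b + 1)), g i =
      ∑ r ∈ range (2 * h), g (2 * h * b + r + 1) := fun g => by
    rw [← Ico_add_one_right_eq_Icc, sum_Ico_eq_sum_range,
      show 2 * h * (b + 1) + 1 - (2 * h * b + 1) = 2 * h by rw [Nat.mul_succ]; omega]
    exact sum_congr rfl fun r _ => by rw [add_right_comm]
  simp only [Exp_const_mul_sum, hIcc, ← mul_sum]
  rw [sum_comm]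
  calc 2 ^ k' * (Δ * (h - 1) / 144)
      = 1 / ((2 * h : ℕ) : ℝ) * ∑ r ∈ range (2 * h), 2 ^ k' * (Δ * tent (2 * h) r / 72) := by
        rw [← mul_sum, ← sum_div, ← mul_sum, sum_range_tent_eq]
        field_simp
        push_cast
        ring
    _ ≤ _ := by
        gcongr with r hr
        exact sum_Exp_TV_ge hk' hh hΔ hΔh hΔh3 W b (θ _) (mem_range.mp hr)

end LastBlock

theorem exists_half_block_length {k' ν : ℕ} {Δ : ℝ} (hk' : 0 < k') (hΔ : 0 < Δ)
    (hΔk : Δ < 1 / (2 * (k' : ℝ))) (hν : ν % 2 = 0)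
    (hνeq : (ν : ℝ) = 2 * ((2 * (k' : ℝ)) / Δ ^ 2) ^ ((1 : ℝ) / 3)) :
    ∃ h : ℕ, ν = 2 * h ∧ 3 ≤ h ∧ Δ * h ≤ 1 ∧ Δ ^ 2 * h ^ 3 = 2 * k' ∧
      ((2 * (k' : ℝ)) * Δ) ^ ((1 : ℝ) / 3) = Δ * h := by
  obtain ⟨h, rfl⟩ : ∃ h, ν = 2 * h := ⟨ν / 2, by omega⟩
  have hthird : (1 : ℝ) / 3 = ((3 : ℕ) : ℝ)⁻¹ := by norm_num
  have hcube : Δ ^ 2 * h ^ 3 = 2 * k' := by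
    have hroot : (h : ℝ) = ((2 * (k' : ℝ)) / Δ ^ 2) ^ ((1 : ℝ) / 3) := by
      push_cast at hνeq; linarith
    rw [hroot, hthird, Real.rpow_inv_natCast_pow (by positivity) (by norm_num)]
    field_simp
  have hh : 2 * (k' : ℝ) < h := by
    have hΔK : Δ * (2 * k') < 1 := by rwa [lt_div_iff₀ (by positivity)] at hΔk
    by_contra! hle
    have : Δ ^ 2 * (h : ℝ) ^ 3 < 2 * k' := by
      calc Δ ^ 2 * (h : ℝ) ^ 3 ≤ Δ ^ 2 * (2 * k') ^ 3 := by gcongr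
        _ = (Δ * (2 * k')) ^ 2 * (2 * k') := by ring
        _ < 1 * (2 * k') := by gcongr; exact pow_lt_one₀ (by positivity) hΔK two_ne_zero
        _ = 2 * k' := one_mul _
    linarith
  have hh2 : (2 : ℝ) < h := by linarith [(Nat.one_le_cast (α := ℝ)).mpr hk']
  refine ⟨h, rfl, by exact_mod_cast hh2, ?_, hcube, ?_⟩
  · have hsq : (Δ * h) ^ 2 * h = 2 * k' := by rw [← hcube]; ring
    nlinarith [mul_nonneg hΔ.le (Nat.cast_nonneg (α := ℝ) h)]
  · rw [hthird, show 2 * (k' : ℝ) * Δ = (Δ * h) ^ 3 by rw [← hcube]; ring,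
      Real.pow_rpow_inv_natCast (by positivity) (by norm_num)]

/-- Lemma B.1, block lower bound. With `k = 2k'`, `Δ ∈ (0,1/k)` and
`ν = 2(k/Δ²)^{1/3}` a positive even integer, there is an absolute constant `c₀ > 0` such
that for every `m ≥ 1`, `ℓ ∈ [m]` and every choice `W` of the first `ℓ−1` blocks from `ℬ`,
the minimax average risk on the `ℓ`-th block — the infimum over adapted pmf-valued online
estimators of the maximum over the last block `B ∈ ℬ` of
`E_{X∼S′×B}[(1/ν)·∑_{i=ν(ℓ−1)+1}^{νℓ} TV(θ̂_i(X_1,…,X_i), P_i)]` — is at least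
`c₀·(kΔ)^{1/3}`. -/
theorem stmt13 :
    ∃ c₀ > (0 : ℝ), ∀ (k' ν : ℕ) (Δ : ℝ),
      0 < k' → 0 < Δ → Δ < 1 / (2 * (k' : ℝ)) →
      0 < ν → ν % 2 = 0 → (ν : ℝ) = 2 * ((2 * (k' : ℝ)) / Δ ^ 2) ^ ((1 : ℝ) / 3) →
      ∀ m : ℕ, 1 ≤ m → ∀ ℓ ∈ Finset.Icc 1 m, ∀ W : ℕ → Fin k' → Bool,
        c₀ * ((2 * (k' : ℝ)) * Δ) ^ ((1 : ℝ) / 3) ≤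
          ⨅ θ : {θ : ℕ → (Fin (ν * ℓ) → Fin (2 * k')) → Fin (2 * k') → ℝ //
              Adapted (ν * ℓ) (2 * k') θ ∧ ∀ i x, IsPMF (θ i x)},
            ⨆ wB : Fin k' → Bool,
              Exp (n := ν * ℓ)
                (concatP k' ν Δ (fun b => if b = ℓ - 1 then wB else W b))
                (fun x => (1 / (ν : ℝ)) * ∑ i ∈ Finset.Icc (ν * (ℓ - 1) + 1) (ν * ℓ),
                  TV (θ.1 i x)
                    (concatP k' ν Δ (fun b => if b = ℓ - 1 then wB else W b) i)) := by
  refine ⟨1 / 216, by norm_num, ?_⟩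
  intro k' ν Δ hk' hΔ hΔk _ hνe hνeq m _ ℓ hℓ W
  obtain ⟨h, rfl, hh3, hΔh, hcube, hroot⟩ := exists_half_block_length hk' hΔ hΔk hνe hνeq
  obtain ⟨b, rfl⟩ : ∃ b, ℓ = b + 1 := ⟨ℓ - 1, by have := (mem_Icc.mp hℓ).1; omega⟩
  simp only [Nat.add_sub_cancel, ← Function.update_apply]
  have hunif := isPMF_perturbedUniform hk' le_rfl zero_le_one fun _ => false
  have : Nonempty {θ : ℕ → (Fin (2 * h * (b + 1)) → Fin (2 * k')) → Fin (2 * k') → ℝ //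
      Adapted (2 * h * (b + 1)) (2 * k') θ ∧ ∀ i x, IsPMF (θ i x)} :=
    ⟨⟨fun _ _ => perturbedUniform k' 0 fun _ => false, fun _ _ _ _ => rfl, fun _ _ => hunif⟩⟩
  refine le_ciInf fun θ => ?_
  have hsum := sum_blockRisk_ge hk' (by omega) hΔ.le hΔh hcube.le W b θ.1
  have hconst : ∑ _w : Fin k' → Bool, Δ * (h - 1) / 144 = 2 ^ k' * (Δ * (h - 1) / 144) := by
    rw [sum_const, card_univ, Fintype.card_fun, Fintype.card_bool, Fintype.card_fin, nsmul_eq_mul]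
    norm_cast
  obtain ⟨w, -, hw⟩ := exists_le_of_sum_le univ_nonempty (hconst.trans_le hsum)
  calc 1 / 216 * ((2 * (k' : ℝ)) * Δ) ^ ((1 : ℝ) / 3) ≤ Δ * (h - 1) / 144 := by
        rw [hroot]
        have : (3 : ℝ) ≤ h := by exact_mod_cast hh3
        nlinarith
    _ ≤ _ := le_ciSup_of_le (Set.finite_range _).bddAbove w hw
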